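/- arXiv:2106.12749 — 3 statements merged into one kernel-verified Lean document; each statement's English description precedes it below -/
import Mathlib

section
/- Let p ≥ 1, let Σ_w ∈ ℝ^{p×p} be positive definite, let m, m' ∈ ℝ^p with m ≠ m', and let ε > 0. Let ν_m and ν_{m'} be the Gaussian measures N(m, Σ_w) and N(m', Σ_w) on ℝ^p, and set Δ := |m − m'|_{Σ_w^{−1}} > 0. Then for every Borel set S ⊆ ℝ^p, ν_m(S) ≤ e^ε · ν_{m'}(S) + Q(ε/Δ − Δ/2). (Core Gaussian mechanism bound used in the proofs of Theorems 1 and 2.) -/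
open MeasureTheory Matrix Real

/-- Gaussian density on `Fin n → ℝ` with mean `m` and covariance `S`. -/
noncomputable def gaussianPdf {n : ℕ} (m : Fin n → ℝ) (S : Matrix (Fin n) (Fin n) ℝ)
    (x : Fin n → ℝ) : ℝ :=
  (2 * π) ^ (-(n : ℝ) / 2) * S.det ^ (-(1 : ℝ) / 2) *
    Real.exp (-(1 / 2) * ((x - m) ⬝ᵥ (S⁻¹ *ᵥ (x - m))))

/-- Gaussian measure `N(m, S)` on `Fin n → ℝ`. -/
noncomputable def gaussianMeasure {n : ℕ} (m : Fin n → ℝ) (S : Matrix (Fin n) (Fin n) ℝ) :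
    Measure (Fin n → ℝ) :=
  volume.withDensity fun x => ENNReal.ofReal (gaussianPdf m S x)

/-- The Q-function `Q(c) = (1/√(2π)) ∫_c^∞ e^{-v²/2} dv`. -/
noncomputable def Qfun (c : ℝ) : ℝ :=
  (1 / Real.sqrt (2 * π)) * ∫ v in Set.Ioi c, Real.exp (-(v ^ 2) / 2)

/-- Inverse of the Q-function. -/
noncomputable def Qinv (δ : ℝ) : ℝ := Function.invFun Qfun δ

/-- `R(ε, δ) = (Q⁻¹(δ) + √((Q⁻¹(δ))² + 2ε)) / (2ε)`. -/
noncomputable def Rfun (ε δ : ℝ) : ℝ :=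
  (Qinv δ + Real.sqrt ((Qinv δ) ^ 2 + 2 * ε)) / (2 * ε)

/-- Weighted norm `|x|_A = (xᵀ A x)^{1/2}`. -/
noncomputable def wnorm {n : ℕ} (A : Matrix (Fin n) (Fin n) ℝ) (x : Fin n → ℝ) : ℝ :=
  Real.sqrt (x ⬝ᵥ (A *ᵥ x))

/-- Largest (real) eigenvalue of a matrix: supremum of its real spectrum. -/
noncomputable def lambdaMax {n : ℕ} (M : Matrix (Fin n) (Fin n) ℝ) : ℝ :=
  sSup (spectrum ℝ M)

/-- Smallest (real) eigenvalue of a matrix: infimum of its real spectrum. -/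
noncomputable def lambdaMin {n : ℕ} (M : Matrix (Fin n) (Fin n) ℝ) : ℝ :=
  sInf (spectrum ℝ M)

/-- χ² probability density with `k` degrees of freedom. -/
noncomputable def chi2pdf (k : ℕ) (z : ℝ) : ℝ :=
  z ^ ((k : ℝ) / 2 - 1) * Real.exp (-z / 2) / (2 ^ ((k : ℝ) / 2) * Real.Gamma ((k : ℝ) / 2))

/-!
The log-likelihood ratio of `N(m, Σ)` against `N(m', Σ)` is the affine function
`x ↦ ⟪Σ⁻¹(m - m'), x - m⟫ + Δ²/2`, so the density of `ν_m` is at most `e^ε` times that of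
`ν_{m'}` outside the half-space `E = {x | ε - Δ²/2 < ⟪Σ⁻¹(m - m'), x - m⟫}`. Hence
`ν_m(S) ≤ e^ε ν_{m'}(S) + ν_m(E)`. Writing `ν_m` as the law of `m + Σ^{1/2} Z` with `Z`
standard normal, the linear functional `⟪u, ·⟫` has law `N(⟪u, m⟫, uᵀΣu)` under `ν_m`, and for
`u = Σ⁻¹(m - m')` its variance is `Δ²`; so `ν_m(E) = Q((ε - Δ²/2)/Δ)`.
-/

open ProbabilityTheory

lemma withDensity_le_mul_add_of_le_mul_off {α : Type*} [MeasurableSpace α] {ρ : Measure α}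
    [SFinite ρ] {f g : α → ENNReal} (hg : Measurable g) {C : ENNReal} {E : Set α}
    (hfg : ∀ x ∉ E, f x ≤ C * g x) (S : Set α) :
    ρ.withDensity f S ≤ C * ρ.withDensity g S + ρ.withDensity f E := by
  calc ρ.withDensity f S ≤ ρ.withDensity f (S \ E) + ρ.withDensity f E :=
        (measure_mono (by simp)).trans (measure_union_le _ _)
    _ ≤ C * ρ.withDensity g S + ρ.withDensity f E := by
        gcongr
        rw [withDensity_apply', withDensity_apply', ← lintegral_const_mul _ hg]
        exact (setLIntegral_mono (hg.const_mul C) fun x hx => hfg x hx.2).trans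
          (lintegral_mono_set Set.sdiff_subset)

section AffineChange
variable {ι : Type*} [Fintype ι] [DecidableEq ι] {A : Matrix ι ι ℝ}

lemma lintegral_comp_add_mulVec (hA : A.det ≠ 0) (m : ι → ℝ) {h : (ι → ℝ) → ENNReal}
    (hh : Measurable h) :
    ENNReal.ofReal |A.det| * ∫⁻ y, h (m + A *ᵥ y) = ∫⁻ x, h x := by
  have hmap : volume.map (toLin' A) = ENNReal.ofReal |A.det⁻¹| • volume := by
    simpa using Real.map_linearMap_volume_pi_eq_smul_volume_pi (f := toLin' A) (by simpa)
  calc ENNReal.ofReal |A.det| * ∫⁻ y, h (m + A *ᵥ y)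
      = ENNReal.ofReal |A.det| * ∫⁻ x, h (m + x) ∂(volume.map (toLin' A)) := by
        rw [lintegral_map (by fun_prop) (toLin' A).continuous_of_finiteDimensional.measurable]
        rfl
    _ = ∫⁻ x, h (m + x) := by
        rw [hmap, lintegral_smul_measure, smul_eq_mul, ← mul_assoc,
          ← ENNReal.ofReal_mul (abs_nonneg _), abs_inv, mul_inv_cancel₀ (abs_ne_zero.mpr hA),
          ENNReal.ofReal_one, one_mul]
    _ = ∫⁻ x, h x := lintegral_add_left_eq_self h m

lemma withDensity_eq_map_add_mulVec (hA : A.det ≠ 0) (m : ι → ℝ)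
    {f g : (ι → ℝ) → ENNReal} (hg : Measurable g)
    (hfg : ∀ y, ENNReal.ofReal |A.det| * g (m + A *ᵥ y) = f y) :
    volume.withDensity g = (volume.withDensity f).map (fun y => m + A *ᵥ y) := by
  ext s hs
  have hmeas : Measurable fun y : ι → ℝ => m + A *ᵥ y := by fun_prop
  rw [Measure.map_apply hmeas hs, withDensity_apply _ hs, withDensity_apply _ (hmeas hs),
    ← lintegral_indicator hs, ← lintegral_comp_add_mulVec hA m (hg.indicator hs),
    ← lintegral_indicator (hmeas hs), ← lintegral_const_mul' _ _ ENNReal.ofReal_ne_top]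
  congr 1
  ext y
  by_cases hy : m + A *ᵥ y ∈ s
  · simp [hy, ← hfg]
  · simp [hy]

end AffineChange

lemma gaussianReal_zero_one_Ioi (c : ℝ) :
    gaussianReal 0 1 (Set.Ioi c) = ENNReal.ofReal (Qfun c) := by
  rw [gaussianReal_apply_eq_integral _ one_ne_zero, Qfun, ← integral_const_mul]
  simp [gaussianPDFReal_def, div_eq_inv_mul]

lemma gaussianReal_eq_map_gaussianReal_zero_one (μ : ℝ) (v : NNReal) :
    gaussianReal μ v = (gaussianReal 0 1).map (fun t => √v * t + μ) := by
  rw [show (fun t => √v * t + μ) = (fun t => t + μ) ∘ (fun t => √v * t) from rfl,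
    ← Measure.map_map (by fun_prop) (by fun_prop),
    gaussianReal_map_const_mul, gaussianReal_map_add_const]
  congr 1
  · simp
  · ext; simp

lemma gaussianReal_Ioi (μ : ℝ) {v : NNReal} (hv : v ≠ 0) (c : ℝ) :
    gaussianReal μ v (Set.Ioi c) = ENNReal.ofReal (Qfun ((c - μ) / √v)) := by
  have hσ : 0 < √(v : ℝ) := by positivity
  rw [gaussianReal_eq_map_gaussianReal_zero_one,
    Measure.map_apply (by fun_prop) measurableSet_Ioi, ← gaussianReal_zero_one_Ioi]
  congr 1
  ext t
  simp only [Set.preimage, Set.mem_Ioi, Set.mem_ofPred_eq, div_lt_iff₀ hσ]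
  constructor <;> intro h <;> linarith [mul_comm t √(v:ℝ)]

lemma pi_gaussianReal_eq_withDensity (ι : Type*) [Fintype ι] :
    Measure.pi (fun _ : ι => gaussianReal 0 1) =
      volume.withDensity fun y => ENNReal.ofReal (∏ i, gaussianPDFReal 0 1 (y i)) := by
  refine Measure.pi_eq fun s hs => ?_
  have hind :
      (Set.univ.pi s).indicator (fun y => ENNReal.ofReal (∏ i, gaussianPDFReal 0 1 (y i))) =
        fun y => ENNReal.ofReal (∏ i, (s i).indicator (gaussianPDFReal 0 1) (y i)) := by
    ext y
    by_cases hy : y ∈ Set.univ.pi s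
    · simp [hy, Set.indicator_of_mem (Set.mem_univ_pi.mp hy _)]
    · obtain ⟨i, hi⟩ : ∃ i, y i ∉ s i := by simpa [Set.mem_univ_pi] using hy
      simp [hy, Finset.prod_eq_zero (f := fun j => (s j).indicator (gaussianPDFReal 0 1) (y j))
        (Finset.mem_univ i) (Set.indicator_of_notMem hi _)]
  have hint : ∀ i, Integrable ((s i).indicator (gaussianPDFReal 0 1)) :=
    fun i => (integrable_gaussianPDFReal 0 1).indicator (hs i)
  have hnonneg : ∀ i x, 0 ≤ (s i).indicator (gaussianPDFReal 0 1) x :=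
    fun i => Set.indicator_nonneg fun x _ => gaussianPDFReal_nonneg 0 1 x
  rw [withDensity_apply _ (MeasurableSet.univ_pi hs),
    ← lintegral_indicator (MeasurableSet.univ_pi hs), hind, volume_pi,
    ← ofReal_integral_eq_lintegral_ofReal (Integrable.fintype_prod hint)
      (Filter.Eventually.of_forall fun y => Finset.prod_nonneg fun i _ => hnonneg i (y i)),
    integral_fintype_prod_eq_prod,
    ENNReal.ofReal_prod_of_nonneg fun i _ => integral_nonneg (hnonneg i)]
  refine Finset.prod_congr rfl fun i _ => ?_
  rw [gaussianReal_apply_eq_integral _ one_ne_zero, integral_indicator (hs i)]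

lemma continuous_gaussianPdf {n : ℕ} (m : Fin n → ℝ) (S : Matrix (Fin n) (Fin n) ℝ) :
    Continuous (gaussianPdf m S) := by
  unfold gaussianPdf
  fun_prop

lemma gaussianPdf_pos {n : ℕ} {S : Matrix (Fin n) (Fin n) ℝ} (hS : S.PosDef)
    (m x : Fin n → ℝ) :
    0 < gaussianPdf m S x := by
  have := hS.det_pos
  unfold gaussianPdf
  positivity

lemma mulVec_dotProduct_inv_mul_transpose_mulVec {ι : Type*} [Fintype ι] [DecidableEq ι]
    {B : Matrix ι ι ℝ} (hB : B.det ≠ 0) (y : ι → ℝ) :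
    (B *ᵥ y) ⬝ᵥ ((B * Bᵀ)⁻¹ *ᵥ (B *ᵥ y)) = y ⬝ᵥ y := by
  have hBu : IsUnit B.det := hB.isUnit
  have hBtu : IsUnit Bᵀ.det := by rwa [det_transpose]
  rw [Matrix.mul_inv_rev, ← mulVec_mulVec, mulVec_mulVec (M := B⁻¹), nonsing_inv_mul _ hBu,
    one_mulVec, dotProduct_mulVec, ← vecMul_transpose, vecMul_vecMul, mul_nonsing_inv _ hBtu,
    vecMul_one]

lemma abs_det_mul_gaussianPdf_add_mulVec {n : ℕ} {B : Matrix (Fin n) (Fin n) ℝ}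
    (hB : B.det ≠ 0) (m y : Fin n → ℝ) :
    |B.det| * gaussianPdf m (B * Bᵀ) (m + B *ᵥ y) = ∏ i, gaussianPDFReal 0 1 (y i) := by
  have hdet : (B * Bᵀ).det ^ (-(1 : ℝ) / 2) = |B.det|⁻¹ := by
    rw [det_mul, det_transpose, ← sq, neg_div, Real.rpow_neg (sq_nonneg _), ← Real.sqrt_eq_rpow,
      Real.sqrt_sq_eq_abs]
  have h2π : (2 * π) ^ (-(n : ℝ) / 2) = ∏ _i : Fin n, (√(2 * π))⁻¹ := by
    rw [Finset.prod_const, Finset.card_univ, Fintype.card_fin, Real.sqrt_eq_rpow,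
      ← Real.rpow_neg_one, ← Real.rpow_mul (by positivity), ← Real.rpow_natCast,
      ← Real.rpow_mul (by positivity)]
    ring_nf
  have hexp : Real.exp (-(1 / 2) * (y ⬝ᵥ y)) = ∏ i, Real.exp (-(y i) ^ 2 / 2) := by
    rw [← Real.exp_sum, dotProduct, Finset.mul_sum]
    exact congrArg _ (Finset.sum_congr rfl fun i _ => by ring)
  rw [gaussianPdf, add_sub_cancel_left, mulVec_dotProduct_inv_mul_transpose_mulVec hB, hdet, h2π,
    hexp, ← mul_assoc, mul_comm |B.det|, mul_assoc _ _ |B.det|,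
    inv_mul_cancel₀ (abs_ne_zero.mpr hB), mul_one, ← Finset.prod_mul_distrib]
  simp [gaussianPDFReal_def]

lemma gaussianMeasure_mul_transpose_eq_map {n : ℕ} {B : Matrix (Fin n) (Fin n) ℝ}
    (hB : B.det ≠ 0) (m : Fin n → ℝ) :
    gaussianMeasure m (B * Bᵀ) =
      (Measure.pi fun _ => gaussianReal 0 1).map (fun y => m + B *ᵥ y) := by
  rw [gaussianMeasure, pi_gaussianReal_eq_withDensity]
  refine withDensity_eq_map_add_mulVec hB m
    (continuous_gaussianPdf m _).measurable.ennreal_ofReal fun y => ?_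
  rw [← ENNReal.ofReal_mul (abs_nonneg _), abs_det_mul_gaussianPdf_add_mulVec hB]

open scoped MatrixOrder in
lemma gaussianMeasure_eq_map_multivariateGaussian {n : ℕ} {S : Matrix (Fin n) (Fin n) ℝ}
    (hS : S.PosDef) (m : Fin n → ℝ) :
    gaussianMeasure m S = (multivariateGaussian (WithLp.toLp 2 m) S).map WithLp.ofLp := by
  set B := CFC.sqrt S
  have hBt : Bᵀ = B := IsSymm.eq (by simpa using (CFC.sqrt_nonneg S).posSemidef.isHermitian)
  have hBB : B * Bᵀ = S := by rw [hBt]; exact CFC.sqrt_mul_sqrt_self S hS.posSemidef.nonneg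
  have hB : B.det ≠ 0 := fun h => hS.det_pos.ne' (by rw [← hBB, det_mul, h, zero_mul])
  rw [← hBB, gaussianMeasure_mul_transpose_eq_map hB, hBB, multivariateGaussian,
    ← map_pi_eq_stdGaussian, Measure.map_map (by fun_prop) (by fun_prop),
    Measure.map_map (by fun_prop) (by fun_prop)]
  rfl

lemma map_dotProduct_gaussianMeasure {n : ℕ} {S : Matrix (Fin n) (Fin n) ℝ}
    (hS : S.PosDef) (m u : Fin n → ℝ) :
    (gaussianMeasure m S).map (u ⬝ᵥ ·) =
      gaussianReal (u ⬝ᵥ m) (u ⬝ᵥ (S *ᵥ u)).toNNReal := by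
  have hL : (u ⬝ᵥ ·) ∘ WithLp.ofLp = innerSL ℝ (WithLp.toLp 2 u) := by
    ext x
    rw [Function.comp_apply, ← WithLp.toLp_ofLp (p := 2) x, innerSL_apply_apply,
      EuclideanSpace.inner_toLp_toLp]
    simp [dotProduct_comm]
  rw [gaussianMeasure_eq_map_multivariateGaussian hS, Measure.map_map (by fun_prop) (by fun_prop),
    hL, IsGaussian.map_eq_gaussianReal,
    ContinuousLinearMap.integral_comp_id_comm IsGaussian.integrable_id,
    integral_id_multivariateGaussian, coe_innerSL_apply,
    ← covarianceBilin_self IsGaussian.memLp_two_id,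
    covarianceBilin_multivariateGaussian hS.posSemidef]
  simp [EuclideanSpace.inner_toLp_toLp, dotProduct_comm]

lemma gaussianMeasure_setOf_lt_dotProduct_sub {n : ℕ} {S : Matrix (Fin n) (Fin n) ℝ}
    (hS : S.PosDef) (m : Fin n → ℝ) {u : Fin n → ℝ} (hu : u ≠ 0) (c : ℝ) :
    gaussianMeasure m S {x | c < u ⬝ᵥ (x - m)} =
      ENNReal.ofReal (Qfun (c / √(u ⬝ᵥ (S *ᵥ u)))) := by
  have hvar : 0 < u ⬝ᵥ (S *ᵥ u) := by simpa using hS.dotProduct_mulVec_pos hu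
  have hset : {x | c < u ⬝ᵥ (x - m)} = (u ⬝ᵥ ·) ⁻¹' Set.Ioi (c + u ⬝ᵥ m) := by
    ext x
    simp only [Set.mem_ofPred_eq, Set.mem_preimage, Set.mem_Ioi, dotProduct_sub]
    constructor <;> intro h <;> linarith
  rw [hset, ← Measure.map_apply (by fun_prop) measurableSet_Ioi,
    map_dotProduct_gaussianMeasure hS, gaussianReal_Ioi _ (by simpa using hvar),
    Real.coe_toNNReal _ hvar.le, add_sub_cancel_right]

lemma gaussianPdf_eq_exp_mul_gaussianPdf {n : ℕ} {S : Matrix (Fin n) (Fin n) ℝ}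
    (hS : S.IsSymm) (m m' x : Fin n → ℝ) :
    gaussianPdf m S x =
      Real.exp ((S⁻¹ *ᵥ (m - m')) ⬝ᵥ (x - m) + (m - m') ⬝ᵥ (S⁻¹ *ᵥ (m - m')) / 2)
        * gaussianPdf m' S x := by
  set d := m - m'
  have hcross : d ⬝ᵥ (S⁻¹ *ᵥ (x - m)) = (S⁻¹ *ᵥ d) ⬝ᵥ (x - m) := by
    rw [dotProduct_mulVec, ← mulVec_transpose, hS.inv.eq]
  have hquad : (x - m') ⬝ᵥ (S⁻¹ *ᵥ (x - m')) = (x - m) ⬝ᵥ (S⁻¹ *ᵥ (x - m)) +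
      2 * ((S⁻¹ *ᵥ d) ⬝ᵥ (x - m)) + d ⬝ᵥ (S⁻¹ *ᵥ d) := by
    rw [← sub_add_sub_cancel x m m', mulVec_add, dotProduct_add, add_dotProduct,
      add_dotProduct, hcross, dotProduct_comm (x - m) (S⁻¹ *ᵥ d)]
    ring
  rw [gaussianPdf, gaussianPdf, hquad, mul_left_comm, ← Real.exp_add]
  ring_nf

lemma gaussianPdf_le_exp_mul_gaussianPdf {n : ℕ} {S : Matrix (Fin n) (Fin n) ℝ}
    (hS : S.PosDef) {m m' x : Fin n → ℝ} {ε : ℝ}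
    (hx : (S⁻¹ *ᵥ (m - m')) ⬝ᵥ (x - m) ≤ ε - (m - m') ⬝ᵥ (S⁻¹ *ᵥ (m - m')) / 2) :
    gaussianPdf m S x ≤ Real.exp ε * gaussianPdf m' S x := by
  rw [gaussianPdf_eq_exp_mul_gaussianPdf (isHermitian_iff_isSymm.mp hS.isHermitian) m m' x]
  exact mul_le_mul_of_nonneg_right (Real.exp_le_exp.mpr (by linarith))
    (gaussianPdf_pos hS m' x).le

theorem gaussian_shift_privacy_bound_general
    {p : ℕ}
    (Sw : Matrix (Fin p) (Fin p) ℝ) (hSw : Sw.PosDef)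
    (m m' : Fin p → ℝ) (hmm : m ≠ m')
    (ε : ℝ) :
    0 < wnorm Sw⁻¹ (m - m') ∧
      ∀ S : Set (Fin p → ℝ), MeasurableSet S →
        gaussianMeasure m Sw S
          ≤ ENNReal.ofReal (Real.exp ε) * gaussianMeasure m' Sw S
            + ENNReal.ofReal
                (Qfun (ε / wnorm Sw⁻¹ (m - m') - wnorm Sw⁻¹ (m - m') / 2)) := by
  set d := m - m'
  set u := Sw⁻¹ *ᵥ d
  have hq : 0 < d ⬝ᵥ u := by
    simpa only [star_trivial] using hSw.inv.dotProduct_mulVec_pos (sub_ne_zero.mpr hmm)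
  have hΔ : 0 < wnorm Sw⁻¹ d := Real.sqrt_pos.mpr hq
  have hΔsq : wnorm Sw⁻¹ d ^ 2 = d ⬝ᵥ u := Real.sq_sqrt hq.le
  have hvar : u ⬝ᵥ (Sw *ᵥ u) = d ⬝ᵥ u := by
    rw [mulVec_mulVec, mul_nonsing_inv _ hSw.det_pos.ne'.isUnit, one_mulVec, dotProduct_comm]
  have hu : u ≠ 0 := fun h => by simp [h] at hq
  refine ⟨hΔ, fun S _ => ?_⟩
  calc gaussianMeasure m Sw S
      ≤ ENNReal.ofReal (Real.exp ε) * gaussianMeasure m' Sw S +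
          gaussianMeasure m Sw {x | ε - d ⬝ᵥ u / 2 < u ⬝ᵥ (x - m)} := by
        refine withDensity_le_mul_add_of_le_mul_off
          (continuous_gaussianPdf m' Sw).measurable.ennreal_ofReal (fun x hx => ?_) S
        rw [← ENNReal.ofReal_mul (Real.exp_pos ε).le]
        exact ENNReal.ofReal_le_ofReal (gaussianPdf_le_exp_mul_gaussianPdf hSw (not_lt.mp hx))
    _ = _ := by
        rw [gaussianMeasure_setOf_lt_dotProduct_sub hSw m hu, hvar, ← hΔsq, Real.sqrt_sq hΔ.le]
        congr 3
        field_simp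

/-- **Core Gaussian mechanism bound.** For Gaussian measures with common covariance `Σ_w`
and means `m ≠ m'`, with `Δ = |m - m'|_{Σ_w⁻¹}`, one has
`ν_m(S) ≤ e^ε ν_{m'}(S) + Q(ε/Δ - Δ/2)` for every Borel set `S`. -/
theorem gaussian_shift_privacy_bound
    {p : ℕ} (hp : 1 ≤ p)
    (Sw : Matrix (Fin p) (Fin p) ℝ) (hSw : Sw.PosDef)
    (m m' : Fin p → ℝ) (hmm : m ≠ m')
    (ε : ℝ) (hε : 0 < ε) :
    0 < wnorm Sw⁻¹ (m - m') ∧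
      ∀ S : Set (Fin p → ℝ), MeasurableSet S →
        gaussianMeasure m Sw S
          ≤ ENNReal.ofReal (Real.exp ε) * gaussianMeasure m' Sw S
            + ENNReal.ofReal
                (Qfun (ε / wnorm Sw⁻¹ (m - m') - wnorm Sw⁻¹ (m - m') / 2)) :=
  gaussian_shift_privacy_bound_general Sw hSw m m' hmm ε
end

section
/- Let p, q ≥ 1 with p ≤ q, let N ∈ ℝ^{p×q} have full row rank p, let Σ ∈ ℝ^{q×q} be positive definite, and let r > 0. Define Σ_w* := r² · N Σ Nᵀ. Then: (i) Σ_w* is positive definite; (ii) λ_max(Σ^{1/2} Nᵀ (Σ_w*)^{−1} N Σ^{1/2}) ≤ 1/r²; and (iii) every positive definite Σ_w ∈ ℝ^{p×p} satisfying λ_max(Σ^{1/2} Nᵀ Σ_w^{−1} N Σ^{1/2}) ≤ 1/r² satisfies Σ_w − Σ_w* ⪰ 0 and hence Tr(Σ_w) ≥ Tr(Σ_w*). (Theorem 3: Σ_w* is the minimum-trace Gaussian noise covariance satisfying the Bayesian differential privacy constraint with r = c(γ,q)·R(ε,δ).) -/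
open MeasureTheory Matrix Real

/-- The square root of a positive semidefinite matrix, as `Matrix.PosSemidef.sqrt` was defined
in Mathlib (Dec 2024); it has since been removed in favour of `CFC.sqrt`. -/
noncomputable def Matrix.PosSemidef.sqrt {n : Type*} [Fintype n] [DecidableEq n] {𝕜 : Type*} [RCLike 𝕜]
    [PartialOrder 𝕜] [StarOrderedRing 𝕜]
    {A : Matrix n n 𝕜} (hA : A.PosSemidef) : Matrix n n 𝕜 :=
  hA.1.eigenvectorUnitary.1 * diagonal ((↑) ∘ (√·) ∘ hA.1.eigenvalues) *
    (star hA.1.eigenvectorUnitary : Matrix n n 𝕜)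

/-! With `M = N Σ^{1/2}` we have `Σ_w* = r² M Mᵀ`, and the matrix in (ii) is `r⁻²` times the
orthogonal projection `Mᵀ (M Mᵀ)⁻¹ M`, whose eigenvalues lie in `{0, 1}`. For (iii), with
`c = 1/r²` the constraint says `c I - Mᵀ Σ_w⁻¹ M ⪰ 0`. This is the Schur complement of the block
`Σ_w` in `[[Σ_w, M], [Mᵀ, c I]]`, so that block matrix is positive semidefinite, and then so is
the Schur complement of its block `c I`, namely `Σ_w - c⁻¹ M Mᵀ = Σ_w - Σ_w*`. -/

namespace Matrix

section Sqrt

variable {n : Type*} [Fintype n] [DecidableEq n]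

theorem PosSemidef.isHermitian_sqrt {𝕜 : Type*} [RCLike 𝕜] [PartialOrder 𝕜]
    [StarOrderedRing 𝕜] {A : Matrix n n 𝕜} (hA : A.PosSemidef) : hA.sqrt.IsHermitian := by
  unfold Matrix.PosSemidef.sqrt
  rw [star_eq_conjTranspose]
  refine isHermitian_mul_mul_conjTranspose _ (isHermitian_diagonal_of_self_adjoint _ ?_)
  ext i
  simp

-- Stated over `ℝ`: for general `𝕜` the order in `sqrt`'s instance arguments need not be the
-- `RCLike` one, for which the eigenvalues are known to be nonnegative.
theorem PosSemidef.sqrt_mul_self {A : Matrix n n ℝ} (hA : A.PosSemidef) :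
    hA.sqrt * hA.sqrt = A := by
  unfold Matrix.PosSemidef.sqrt
  conv_rhs => rw [hA.1.spectral_theorem, Unitary.conjStarAlgAut_apply]
  simp only [Matrix.mul_assoc, ← Matrix.mul_assoc (star _ : Matrix n n ℝ) _ _,
    Unitary.coe_star_mul_self, Matrix.one_mul]
  simp only [← Matrix.mul_assoc, diagonal_mul_diagonal]
  congr 3
  funext i
  simp [Real.mul_self_sqrt (hA.eigenvalues_nonneg i)]

end Sqrt

theorem vecMul_injective_of_rank_eq {m n K : Type*} [Fintype m] [Fintype n] [Field K]
    {A : Matrix m n K} (h : A.rank = Fintype.card m) : Function.Injective A.vecMul := by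
  rw [vecMul_injective_iff, linearIndependent_iff_card_eq_finrank_span, Set.finrank,
    ← rank_eq_finrank_span_row, h]

theorem isIdempotentElem_transpose_mul_inv_mul {m n R : Type*} [Fintype m] [DecidableEq m]
    [Fintype n] [CommRing R] (M : Matrix m n R) (h : IsUnit (M * Mᵀ).det) :
    IsIdempotentElem (Mᵀ * (M * Mᵀ)⁻¹ * M) :=
  calc Mᵀ * (M * Mᵀ)⁻¹ * M * (Mᵀ * (M * Mᵀ)⁻¹ * M)
      = Mᵀ * ((M * Mᵀ)⁻¹ * (M * Mᵀ)) * (M * Mᵀ)⁻¹ * M := by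
        simp only [Matrix.mul_assoc]
    _ = Mᵀ * (M * Mᵀ)⁻¹ * M := by rw [nonsing_inv_mul _ h, Matrix.mul_one]

theorem PosDef.posSemidef_sub_inv_smul_mul_transpose {m n : Type*} [Fintype m] [Fintype n]
    [DecidableEq m] [DecidableEq n] {W : Matrix m m ℝ} (hW : W.PosDef) (M : Matrix m n ℝ)
    {c : ℝ} (hc : 0 < c) (h : (c • 1 - Mᵀ * W⁻¹ * M).PosSemidef) :
    (W - c⁻¹ • (M * Mᵀ)).PosSemidef := by
  have hcI : (c • 1 : Matrix n n ℝ).PosDef := PosDef.one.smul hc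
  have := hW.isUnit.invertible
  have := hcI.isUnit.invertible
  have := invertibleOfNonzero hc.ne'
  have hblock : (fromBlocks W M Mᴴ (c • 1)).PosSemidef :=
    (PosDef.fromBlocks₁₁ M (c • 1) hW).mpr (by simpa using h)
  have hschur := (PosDef.fromBlocks₂₂ W M hcI).mp hblock
  rwa [inv_smul _ _ (by simp), invOf_eq_inv, inv_one, Matrix.mul_smul, Matrix.mul_one,
    Matrix.smul_mul, conjTranspose_eq_transpose_of_trivial] at hschur

theorem IsHermitian.posSemidef_smul_one_sub_of_lambdaMax_le {n : ℕ}
    {H : Matrix (Fin n) (Fin n) ℝ} (hH : H.IsHermitian) {c : ℝ} (h : lambdaMax H ≤ c) :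
    (c • 1 - H).PosSemidef := by
  rw [posSemidef_iff_isHermitian_and_spectrum_nonneg]
  refine ⟨(isHermitian_one.smul (.all c)).sub hH, ?_⟩
  rw [← Algebra.algebraMap_eq_smul_one, ← spectrum.singleton_sub_eq]
  rintro _ ⟨a, ha, μ, hμ, rfl⟩
  rw [Set.mem_singleton_iff.mp ha, Set.mem_ofPred_eq, sub_nonneg]
  exact (le_csSup H.finite_spectrum.bddAbove hμ).trans h

end Matrix

theorem lambdaMax_smul_le_of_isIdempotentElem {n : ℕ} {P : Matrix (Fin n) (Fin n) ℝ}
    (hP : IsIdempotentElem P) {c : ℝ} (hc : 0 < c) : lambdaMax (c • P) ≤ c := by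
  refine Real.sSup_le ?_ hc.le
  rw [show c • P = Units.mk0 c hc.ne' • P from rfl, spectrum.unit_smul_eq_smul]
  rintro _ ⟨μ, hμ, rfl⟩
  rcases hP.spectrum_subset ℝ hμ with rfl | rfl <;> simp [hc.le]

theorem min_trace_noise_covariance_general
    {p q : ℕ}
    (N : Matrix (Fin p) (Fin q) ℝ) (hN : N.rank = p)
    (Sig : Matrix (Fin q) (Fin q) ℝ) (hSig : Sig.PosDef)
    (r : ℝ) (hr : 0 < r) :
    (r ^ 2 • (N * Sig * Nᵀ)).PosDef ∧
    lambdaMax ((PosSemidef.sqrt hSig.posSemidef) * Nᵀ * (r ^ 2 • (N * Sig * Nᵀ))⁻¹ * N * (PosSemidef.sqrt hSig.posSemidef))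
      ≤ 1 / r ^ 2 ∧
    ∀ Sw : Matrix (Fin p) (Fin p) ℝ, Sw.PosDef →
      lambdaMax ((PosSemidef.sqrt hSig.posSemidef) * Nᵀ * Sw⁻¹ * N * (PosSemidef.sqrt hSig.posSemidef)) ≤ 1 / r ^ 2 →
      (Sw - r ^ 2 • (N * Sig * Nᵀ)).PosSemidef ∧
        (r ^ 2 • (N * Sig * Nᵀ)).trace ≤ Sw.trace := by
  set S := hSig.posSemidef.sqrt
  have hSt : Sᵀ = S := hSig.posSemidef.isHermitian_sqrt
  set M := N * S
  have hMM : M * Mᵀ = N * Sig * Nᵀ := by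
    rw [transpose_mul, hSt, Matrix.mul_assoc, ← Matrix.mul_assoc S,
      hSig.posSemidef.sqrt_mul_self, ← Matrix.mul_assoc]
  have hB : (N * Sig * Nᵀ).PosDef :=
    hSig.mul_mul_conjTranspose_same (vecMul_injective_of_rank_eq (by simpa using hN))
  have hBdet : IsUnit (N * Sig * Nᵀ).det := hB.det_pos.ne'.isUnit
  have hr2 : 0 < r ^ 2 := pow_pos hr 2
  refine ⟨hB.smul hr2, ?_, fun Sw hSw hcon => ?_⟩
  · have hproj : S * Nᵀ * (r ^ 2 • (N * Sig * Nᵀ))⁻¹ * N * S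
        = (r ^ 2)⁻¹ • (Mᵀ * (M * Mᵀ)⁻¹ * M) := by
      have := invertibleOfNonzero hr2.ne'
      rw [Matrix.inv_smul _ _ hBdet, invOf_eq_inv, ← hMM]
      simp only [M, transpose_mul, hSt, Matrix.mul_smul, Matrix.smul_mul, Matrix.mul_assoc]
    rw [hproj, one_div]
    exact lambdaMax_smul_le_of_isIdempotentElem
      (isIdempotentElem_transpose_mul_inv_mul M (hMM ▸ hBdet)) (inv_pos.mpr hr2)
  · have hH : S * Nᵀ * Sw⁻¹ * N * S = Mᵀ * Sw⁻¹ * M := by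
      simp only [M, transpose_mul, hSt, Matrix.mul_assoc]
    have hHerm : (Mᵀ * Sw⁻¹ * M).IsHermitian := by
      simpa only [conjTranspose_eq_transpose_of_trivial] using
        isHermitian_conjTranspose_mul_mul M hSw.inv.isHermitian
    have hpsd : (Sw - r ^ 2 • (N * Sig * Nᵀ)).PosSemidef := by
      simpa only [inv_inv, hMM] using hSw.posSemidef_sub_inv_smul_mul_transpose M
        (inv_pos.mpr hr2)
        (hHerm.posSemidef_smul_one_sub_of_lambdaMax_le (by rwa [hH, one_div] at hcon))
    exact ⟨hpsd, by linarith [hpsd.trace_nonneg, trace_sub Sw (r ^ 2 • (N * Sig * Nᵀ))]⟩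

/-- **Theorem 3.** For full-row-rank `N` and `Σ_w* = r² N Σ Nᵀ`: `Σ_w*` is positive
definite, it satisfies the privacy constraint
`λ_max(Σ^{1/2} Nᵀ (Σ_w*)⁻¹ N Σ^{1/2}) ≤ 1/r²`, and any positive definite `Σ_w`
satisfying this constraint dominates `Σ_w*` in the Loewner order, hence in trace. -/
theorem min_trace_noise_covariance
    {p q : ℕ} (hp : 1 ≤ p) (hq : 1 ≤ q) (hpq : p ≤ q)
    (N : Matrix (Fin p) (Fin q) ℝ) (hN : N.rank = p)
    (Sig : Matrix (Fin q) (Fin q) ℝ) (hSig : Sig.PosDef)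
    (r : ℝ) (hr : 0 < r) :
    (r ^ 2 • (N * Sig * Nᵀ)).PosDef ∧
    lambdaMax ((PosSemidef.sqrt hSig.posSemidef) * Nᵀ * (r ^ 2 • (N * Sig * Nᵀ))⁻¹ * N * (PosSemidef.sqrt hSig.posSemidef))
      ≤ 1 / r ^ 2 ∧
    ∀ Sw : Matrix (Fin p) (Fin p) ℝ, Sw.PosDef →
      lambdaMax ((PosSemidef.sqrt hSig.posSemidef) * Nᵀ * Sw⁻¹ * N * (PosSemidef.sqrt hSig.posSemidef)) ≤ 1 / r ^ 2 →
      (Sw - r ^ 2 • (N * Sig * Nᵀ)).PosSemidef ∧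
        (r ^ 2 • (N * Sig * Nᵀ)).trace ≤ Sw.trace :=
  min_trace_noise_covariance_general N hN Sig hSig r hr
end

section
/- For every integer k ≥ 1 and every x > 0, ∫_0^x p(z; k+1) dz < ∫_0^x p(z; k) dz, where p(·; k) is the χ² density with k degrees of freedom. Consequently, for every fixed γ ∈ (0,1), the threshold c(γ, k) (the unique c > 0 with ∫_0^{c²/2} p(z;k) dz = γ) is strictly increasing in k. (Claim in Section III-C: as the horizon T grows, c(γ, T) grows, so larger noise is required to guarantee Bayesian differential privacy.) -/
open MeasureTheory Matrix Real

/-!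
The difference `p(z; k) - p(z; k+1) = z^{k/2-1} e^{-z/2} (1/N_k - √z/N_{k+1})`, where `N_k` is the
normalising constant of `p(·; k)`, is positive before `(N_{k+1}/N_k)²` and negative after it.
Since both densities have total mass one, the integral of the difference over `(0, x)` is positive
for every `x > 0`: up to the crossing point the integrand is positive, and beyond it the integral
equals minus the (negative) integral of the difference over `(x, ∞)`. So the distribution function
for `k + 1` degrees of freedom lies strictly below the one for `k`, and as distribution functions
are monotone, reaching the level `γ` with `k + 1` degrees of freedom needs a larger argument.
-/

open Set

theorem setIntegral_pos_of_pos_on {X : Type*} [MeasurableSpace X] {μ : Measure X} {s : Set X}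
    {f : X → ℝ} (hs : MeasurableSet s) (hμs : μ s ≠ 0) (hf : IntegrableOn f s μ)
    (hpos : ∀ x ∈ s, 0 < f x) : 0 < ∫ x in s, f x ∂μ := by
  have hsupp : Function.support f ∩ s = s :=
    inter_eq_self_of_subset_right fun x hx => (hpos x hx).ne'
  rw [setIntegral_pos_iff_support_of_nonneg_ae
    ((ae_restrict_iff' hs).2 (.of_forall fun x hx => (hpos x hx).le)) hf, hsupp]
  exact pos_iff_ne_zero.2 hμs

theorem intervalIntegral_pos_of_single_crossing {h : ℝ → ℝ} {a z₀ x : ℝ}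
    (hint : IntegrableOn h (Ioi a)) (htot : ∫ z in Ioi a, h z = 0)
    (hpos : ∀ z ∈ Ioo a z₀, 0 < h z) (hneg : ∀ z ∈ Ioi z₀, h z < 0) (hx : a < x) :
    0 < ∫ z in a..x, h z := by
  rcases le_or_gt x z₀ with hxz | hzx
  · refine intervalIntegral.intervalIntegral_pos_of_pos_on ?_
      (fun z hz => hpos z ⟨hz.1, hz.2.trans_le hxz⟩) hx
    exact (intervalIntegrable_iff_integrableOn_Ioc_of_le hx.le).2
      (hint.mono_set Ioc_subset_Ioi_self)
  · rw [← intervalIntegral.integral_Ioi_sub_Ioi hint hx.le, htot, zero_sub, neg_pos,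
      ← neg_pos, ← integral_neg]
    exact setIntegral_pos_of_pos_on measurableSet_Ioi (by simp)
      (hint.mono_set (Ioi_subset_Ioi hx.le)).neg fun z hz => neg_pos.2 (hneg z (hzx.trans hz))

noncomputable def chi2Norm (k : ℕ) : ℝ :=
  2 ^ ((k : ℝ) / 2) * Real.Gamma ((k : ℝ) / 2)

noncomputable def chi2cdf (k : ℕ) (x : ℝ) : ℝ :=
  ∫ z in (0 : ℝ)..x, chi2pdf k z

theorem chi2Norm_pos {k : ℕ} (hk : 0 < k) : 0 < chi2Norm k := by
  have hk2 : (0 : ℝ) < (k : ℝ) / 2 := by positivity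
  exact mul_pos (rpow_pos_of_pos two_pos _) (Gamma_pos_of_pos hk2)

theorem chi2pdf_nonneg (k : ℕ) {z : ℝ} (hz : 0 ≤ z) : 0 ≤ chi2pdf k z := by
  have hk2 : (0 : ℝ) ≤ (k : ℝ) / 2 := by positivity
  exact div_nonneg (mul_nonneg (rpow_nonneg hz _) (exp_pos _).le)
    (mul_nonneg (rpow_nonneg zero_le_two _) (Gamma_nonneg_of_nonneg hk2))

theorem chi2pdf_eq_rpow_mul_exp (k : ℕ) (z : ℝ) :
    chi2pdf k z = z ^ ((k : ℝ) / 2 - 1) * exp (-(1 / 2) * z ^ (1 : ℝ)) * (chi2Norm k)⁻¹ := by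
  rw [chi2pdf, chi2Norm, rpow_one, div_eq_mul_inv, neg_div, neg_mul, one_div, inv_mul_eq_div]

theorem integrableOn_chi2pdf {k : ℕ} (hk : 0 < k) : IntegrableOn (chi2pdf k) (Ioi 0) := by
  have hs : (-1 : ℝ) < (k : ℝ) / 2 - 1 := by linarith [show (0 : ℝ) < k / 2 by positivity]
  simp_rw [funext (chi2pdf_eq_rpow_mul_exp k)]
  exact (integrableOn_rpow_mul_exp_neg_mul_rpow hs one_pos one_half_pos).mul_const _

theorem intervalIntegrable_chi2pdf {k : ℕ} (hk : 0 < k) {a b : ℝ} (ha : 0 ≤ a) (hb : 0 ≤ b) :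
    IntervalIntegrable (chi2pdf k) volume a b := by
  rw [intervalIntegrable_iff]
  exact (integrableOn_chi2pdf hk).mono_set fun z hz => (le_min ha hb).trans_lt hz.1

theorem integral_chi2pdf_Ioi {k : ℕ} (hk : 0 < k) : ∫ z in Ioi (0 : ℝ), chi2pdf k z = 1 := by
  have hs : (-1 : ℝ) < (k : ℝ) / 2 - 1 := by linarith [show (0 : ℝ) < k / 2 by positivity]
  have hscale : (1 / 2 : ℝ) ^ (-((k : ℝ) / 2 - 1 + 1) / 1) = 2 ^ ((k : ℝ) / 2) := by
    rw [one_div, inv_rpow zero_le_two, ← rpow_neg zero_le_two]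
    ring_nf
  simp_rw [chi2pdf_eq_rpow_mul_exp, integral_mul_const,
    integral_rpow_mul_exp_neg_mul_rpow one_pos hs one_half_pos, hscale]
  rw [show ((k : ℝ) / 2 - 1 + 1) / 1 = (k : ℝ) / 2 by ring, one_div_one, mul_one]
  exact mul_inv_cancel₀ (chi2Norm_pos hk).ne'

theorem chi2pdf_sub_chi2pdf_succ (k : ℕ) {z : ℝ} (hz : 0 < z) :
    chi2pdf k z - chi2pdf (k + 1) z =
      z ^ ((k : ℝ) / 2 - 1) * exp (-z / 2) * (1 / chi2Norm k - √z / chi2Norm (k + 1)) := by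
  have hexp : ((k + 1 : ℕ) : ℝ) / 2 - 1 = ((k : ℝ) / 2 - 1) + 1 / 2 := by push_cast; ring
  rw [chi2pdf, chi2pdf, hexp, rpow_add hz, sqrt_eq_rpow]
  simp only [chi2Norm]
  ring

theorem chi2pdf_sub_chi2pdf_succ_pos {k : ℕ} (hk : 0 < k) {z : ℝ} (hz : 0 < z)
    (hz₀ : z < (chi2Norm (k + 1) / chi2Norm k) ^ 2) : 0 < chi2pdf k z - chi2pdf (k + 1) z := by
  have hN := chi2Norm_pos hk
  have hN' := chi2Norm_pos k.succ_pos
  have hsqrt : √z < chi2Norm (k + 1) / chi2Norm k := (sqrt_lt' (by positivity)).2 hz₀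
  rw [chi2pdf_sub_chi2pdf_succ k hz]
  refine mul_pos (by positivity) (sub_pos.2 ?_)
  rw [div_lt_div_iff₀ hN' hN, one_mul]
  rwa [lt_div_iff₀ hN] at hsqrt

theorem chi2pdf_sub_chi2pdf_succ_neg {k : ℕ} (hk : 0 < k) {z : ℝ}
    (hz₀ : (chi2Norm (k + 1) / chi2Norm k) ^ 2 < z) : chi2pdf k z - chi2pdf (k + 1) z < 0 := by
  have hN := chi2Norm_pos hk
  have hN' := chi2Norm_pos k.succ_pos
  have hz : 0 < z := lt_of_le_of_lt (sq_nonneg _) hz₀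
  have hsqrt : chi2Norm (k + 1) / chi2Norm k < √z := (lt_sqrt (by positivity)).2 hz₀
  rw [chi2pdf_sub_chi2pdf_succ k hz]
  refine mul_neg_of_pos_of_neg (by positivity) (sub_neg.2 ?_)
  rw [div_lt_div_iff₀ hN hN', one_mul]
  rwa [div_lt_iff₀ hN] at hsqrt

theorem chi2cdf_succ_lt {k : ℕ} (hk : 0 < k) {x : ℝ} (hx : 0 < x) :
    chi2cdf (k + 1) x < chi2cdf k x := by
  have hint := integrableOn_chi2pdf hk
  have hint' := integrableOn_chi2pdf k.succ_pos
  rw [← sub_pos, chi2cdf, chi2cdf, ← intervalIntegral.integral_sub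
    (intervalIntegrable_chi2pdf hk le_rfl hx.le)
    (intervalIntegrable_chi2pdf k.succ_pos le_rfl hx.le)]
  refine intervalIntegral_pos_of_single_crossing (hint.sub hint') ?_
    (fun z hz => chi2pdf_sub_chi2pdf_succ_pos hk hz.1 hz.2)
    (fun z hz => chi2pdf_sub_chi2pdf_succ_neg hk hz) hx
  rw [integral_sub hint hint', integral_chi2pdf_Ioi hk, integral_chi2pdf_Ioi k.succ_pos, sub_self]

theorem chi2cdf_le_chi2cdf {k : ℕ} (hk : 0 < k) {x y : ℝ} (hx : 0 ≤ x) (hxy : x ≤ y) :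
    chi2cdf k x ≤ chi2cdf k y :=
  intervalIntegral.integral_mono_interval le_rfl hx hxy
    ((ae_restrict_iff' measurableSet_Ioc).2 (.of_forall fun _ hz => chi2pdf_nonneg k hz.1.le))
    (intervalIntegrable_chi2pdf hk le_rfl (hx.trans hxy))

/-- **Monotonicity in the degrees of freedom.** For every `k ≥ 1` and `x > 0`,
`∫_0^x p(z; k+1) dz < ∫_0^x p(z; k) dz`; consequently, for fixed `γ ∈ (0,1)` the
threshold `c(γ, k)` is strictly increasing in `k`. -/
theorem chi_squared_cdf_strict_anti_in_dof
    (k : ℕ) (hk : 1 ≤ k) :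
    (∀ x : ℝ, 0 < x →
        (∫ z in (0:ℝ)..x, chi2pdf (k + 1) z) < ∫ z in (0:ℝ)..x, chi2pdf k z) ∧
    (∀ γ : ℝ, 0 < γ → γ < 1 →
      ∀ c₁ c₂ : ℝ, 0 < c₁ → 0 < c₂ →
        (∫ z in (0:ℝ)..(c₁ ^ 2 / 2), chi2pdf k z) = γ →
        (∫ z in (0:ℝ)..(c₂ ^ 2 / 2), chi2pdf (k + 1) z) = γ →
        c₁ < c₂) := by
  refine ⟨fun x hx => chi2cdf_succ_lt hk hx, fun γ _ _ c₁ c₂ hc₁ hc₂ h₁ h₂ => ?_⟩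
  by_contra! hc
  have hsq : c₂ ^ 2 / 2 ≤ c₁ ^ 2 / 2 := by gcongr
  have hlt : chi2cdf (k + 1) (c₁ ^ 2 / 2) < chi2cdf k (c₁ ^ 2 / 2) :=
    chi2cdf_succ_lt hk (by positivity)
  have hmono : chi2cdf (k + 1) (c₂ ^ 2 / 2) ≤ chi2cdf (k + 1) (c₁ ^ 2 / 2) :=
    chi2cdf_le_chi2cdf k.succ_pos (by positivity) hsq
  unfold chi2cdf at hlt hmono
  linarith
end
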